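/- For all real a ≤ b, 2∫_a^b G(x) dx = Φ(b) - Φ(a) + b·G(b) - a·G(a), where G(x) = φ(x) - x(1 - Φ(x)). -/

import Mathlib

/-!
Since `φ' = -xφ` and `Φ' = φ`, the loss function satisfies `G' = Φ - 1`, hence
`(x G(x))' = G + x(Φ - 1) = 2G - φ`. Integrating over `[a, b]` and using `∫_a^b φ = Φ(b) - Φ(a)`
gives the identity.
-/

noncomputable def phi (x : ℝ) : ℝ := (Real.sqrt (2 * Real.pi))⁻¹ * Real.exp (-x ^ 2 / 2)

noncomputable def Phi (x : ℝ) : ℝ := ∫ t in Set.Iic x, phi t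

noncomputable def G (x : ℝ) : ℝ := phi x - x * (1 - Phi x)

open MeasureTheory ProbabilityTheory

lemma phi_eq_gaussianPDFReal : phi = gaussianPDFReal 0 1 := by
  ext x
  simp [phi, gaussianPDFReal]

lemma integrable_phi : Integrable phi := by
  rw [phi_eq_gaussianPDFReal]
  exact integrable_gaussianPDFReal 0 1

lemma continuous_phi : Continuous phi := by
  unfold phi; fun_prop

lemma intervalIntegral_phi (a b : ℝ) : ∫ x in a..b, phi x = Phi b - Phi a :=
  (intervalIntegral.integral_Iic_sub_Iic integrable_phi.integrableOn
    integrable_phi.integrableOn).symm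

lemma hasDerivAt_Phi (x : ℝ) : HasDerivAt Phi (phi x) x := by
  have h := (intervalIntegral.integral_hasDerivAt_right (continuous_phi.intervalIntegrable 0 x)
    continuous_phi.aestronglyMeasurable.stronglyMeasurableAtFilter
    continuous_phi.continuousAt).const_add (Phi 0)
  refine h.congr_of_eventuallyEq (Filter.Eventually.of_forall fun y => ?_)
  simp only [intervalIntegral_phi, add_sub_cancel]

lemma hasDerivAt_phi (x : ℝ) : HasDerivAt phi (-x * phi x) x := by
  refine ((((hasDerivAt_pow 2 x).neg.div_const 2).exp).const_mul
    (Real.sqrt (2 * Real.pi))⁻¹).congr_deriv ?_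
  simp only [phi, Pi.neg_apply]; ring

lemma continuous_Phi : Continuous Phi :=
  continuous_iff_continuousAt.2 fun x => (hasDerivAt_Phi x).continuousAt

lemma continuous_G : Continuous G :=
  continuous_phi.sub (continuous_id.mul (continuous_const.sub continuous_Phi))

lemma hasDerivAt_G (x : ℝ) : HasDerivAt G (Phi x - 1) x := by
  refine ((hasDerivAt_phi x).sub
    ((hasDerivAt_id x).mul ((hasDerivAt_Phi x).const_sub 1))).congr_deriv ?_
  simp only [id_eq]; ring

lemma hasDerivAt_id_mul_G (x : ℝ) : HasDerivAt (fun y => y * G y) (2 * G x - phi x) x := by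
  refine ((hasDerivAt_id x).mul (hasDerivAt_G x)).congr_deriv ?_
  simp only [G, id_eq]; ring

theorem loss_function_integral_general (a b : ℝ) :
    2 * ∫ x in a..b, G x = Phi b - Phi a + b * G b - a * G a := by
  have hftc := intervalIntegral.integral_eq_sub_of_hasDerivAt (fun x _ => hasDerivAt_id_mul_G x)
    (((continuous_const.mul continuous_G).sub continuous_phi).intervalIntegrable a b)
  rw [intervalIntegral.integral_sub ((continuous_G.intervalIntegrable a b).const_mul 2)
    (continuous_phi.intervalIntegrable a b), intervalIntegral.integral_const_mul,
    intervalIntegral_phi] at hftc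
  linarith

/-- `2∫_a^b G(x) dx = Φ(b) - Φ(a) + b G(b) - a G(a)` for `a ≤ b`. -/
theorem loss_function_integral (a b : ℝ) (hab : a ≤ b) :
    2 * ∫ x in a..b, G x = Phi b - Phi a + b * G b - a * G a :=
  loss_function_integral_general a b
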